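/- arXiv:math/0309171 — 11 statements merged into one kernel-verified Lean document; each statement's English description precedes it below -/
import Mathlib

section
/- Let Q be a quadri-algebra with operations ↘, ↗, ↖, ↙ satisfying the nine quadri-algebra axioms. Define x ≺ y := x↖y + x↙y and x ≻ y := x↗y + x↘y. Then (Q, ≺, ≻) is a dendriform algebra, i.e., (x≺y)≺z = x≺(y≺z) + x≺(y≻z), (x≻y)≺z = x≻(y≺z), and (x≺y)≻z + (x≻y)≻z = x≻(y≻z). -/
def IsQuadri {Q : Type*} [AddCommGroup Q] (se nea nw sw : Q → Q → Q) : Prop :=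
  ∀ x y z : Q,
    nw (nw x y) z = nw x (se y z + nea y z + nw y z + sw y z) ∧
    nw (nea x y) z = nea x (nw y z + sw y z) ∧
    nea (nea x y + nw x y) z = nea x (nea y z + se y z) ∧
    nw (sw x y) z = sw x (nea y z + nw y z) ∧
    nw (se x y) z = se x (nw y z) ∧
    nea (se x y + sw x y) z = se x (nea y z) ∧
    sw (nw x y + sw x y) z = sw x (se y z + sw y z) ∧
    sw (nea x y + se x y) z = se x (sw y z) ∧
    se (se x y + nea x y + nw x y + sw x y) z = se x (se y z)

def IsDendriform {D : Type*} [AddCommGroup D] (p s : D → D → D) : Prop :=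
  ∀ x y z : D,
    p (p x y) z = p x (p y z) + p x (s y z) ∧
    p (s x y) z = s x (p y z) ∧
    s (p x y) z + s (s x y) z = s x (s y z)

theorem quadri_horizontal_dendriform {K Q : Type*} [Field K] [AddCommGroup Q] [Module K Q]
    (se nea nw sw : Q →ₗ[K] Q →ₗ[K] Q)
    (hQ : IsQuadri (fun a b => se a b) (fun a b => nea a b) (fun a b => nw a b)
      (fun a b => sw a b)) :
    IsDendriform (fun a b => nw a b + sw a b) (fun a b => nea a b + se a b) := by
  intro x y z
  obtain ⟨h1, h2, h3, h4, h5, h6, h7, h8, h9⟩ := hQ x y z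
  simp only [map_add, LinearMap.add_apply] at *
  refine ⟨?_, ?_, ?_⟩
  · rw [h1, h4, h7]; abel
  · rw [h2, h5, h8]; abel
  · calc (nea (nw x y) z + nea (sw x y) z + (se (nw x y) z + se (sw x y) z)) +
        (nea (nea x y) z + nea (se x y) z + (se (nea x y) z + se (se x y) z))
        = (nea (nea x y) z + nea (nw x y) z) + (nea (se x y) z + nea (sw x y) z) +
          (se (se x y) z + se (nea x y) z + se (nw x y) z + se (sw x y) z) := by abel
      _ = _ := by rw [h3, h6, h9]; abel
end

section
/- Let Q be a quadri-algebra. Define x ∧ y := x↗y + x↖y and x ∨ y := x↘y + x↙y. Then (Q, ∧, ∨) is a dendriform algebra with ∧ playing the role of the left operation and ∨ the role of the right operation: (x∧y)∧z = x∧(y∧z) + x∧(y∨z), (x∨y)∧z = x∨(y∧z), and (x∧y)∨z + (x∨y)∨z = x∨(y∨z). -/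
theorem quadri_vertical_dendriform {K Q : Type*} [Field K] [AddCommGroup Q] [Module K Q]
    (se nea nw sw : Q →ₗ[K] Q →ₗ[K] Q)
    (hQ : IsQuadri (fun a b => se a b) (fun a b => nea a b) (fun a b => nw a b)
      (fun a b => sw a b)) :
    IsDendriform (fun a b => nea a b + nw a b) (fun a b => se a b + sw a b) := by
  intro x y z
  obtain ⟨h1,h2,h3,h4,h5,h6,h7,h8,h9⟩ := hQ x y z
  simp only [map_add, LinearMap.add_apply] at *
  refine ⟨?_, ?_, ?_⟩ <;> [skip; skip; skip]
  · linear_combination (norm := abel) h1 + h2 + h3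
  · linear_combination (norm := abel) h4 + h5 + h6
  · linear_combination (norm := abel) h7 + h8 + h9
end

section
/- Let Q be a commutative quadri-algebra, i.e., a quadri-algebra satisfying x↘y = y↖x and x↗y = y↙x for all x, y. Then the operation x ≻ y := x↘y + y↙x is a left Zinbiel product on Q, i.e., x ≻ (y ≻ z) = (x ≻ y) ≻ z + (y ≻ x) ≻ z. -/
theorem comm_quadri_zinbiel {K Q : Type*} [Field K] [AddCommGroup Q] [Module K Q]
    (se nea nw sw : Q →ₗ[K] Q →ₗ[K] Q)
    (hQ : IsQuadri (fun a b => se a b) (fun a b => nea a b) (fun a b => nw a b)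
      (fun a b => sw a b))
    (hc1 : ∀ x y : Q, se x y = nw y x) (hc2 : ∀ x y : Q, nea x y = sw y x) :
    ∀ x y z : Q,
      (se x (se y z + sw z y) + sw (se y z + sw z y) x) =
      (se (se x y + sw y x) z + sw z (se x y + sw y x)) +
      (se (se y x + sw x y) z + sw z (se y x + sw x y)) := by
  intro x y z
  obtain ⟨-, -, h3a, -, -, -, -, -, h9⟩ := hQ x y z
  obtain ⟨-, -, h3b, -, -, -, -, -, -⟩ := hQ y x z
  obtain ⟨-, -, -, -, -, -, -, h8, -⟩ := hQ x z y
  simp only [] at h3a h3b h8 h9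
  simp only [← hc1, ← hc2] at h3a h3b h8 h9 ⊢
  simp only [map_add, LinearMap.add_apply] at h3a h3b h8 h9 ⊢
  linear_combination (norm := abel) -h9 - h8 - h3a - h3b
end

section
/- Let Q be a commutative quadri-algebra (x↘y = y↖x and x↗y = y↙x). Then x ⋆ y := x↘y + x↙y + y↘x + y↙x is a commutative associative product on Q. -/
theorem comm_quadri_star_comm_assoc {K Q : Type*} [Field K] [AddCommGroup Q] [Module K Q]
    (se nea nw sw : Q →ₗ[K] Q →ₗ[K] Q)
    (hQ : IsQuadri (fun a b => se a b) (fun a b => nea a b) (fun a b => nw a b)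
      (fun a b => sw a b))
    (hc1 : ∀ x y : Q, se x y = nw y x) (hc2 : ∀ x y : Q, nea x y = sw y x) :
    (∀ x y : Q, se x y + sw x y + se y x + sw y x = se y x + sw y x + se x y + sw x y) ∧
    (∀ x y z : Q,
      (se (se x y + sw x y + se y x + sw y x) z + sw (se x y + sw x y + se y x + sw y x) z +
        se z (se x y + sw x y + se y x + sw y x) + sw z (se x y + sw x y + se y x + sw y x)) =
      (se x (se y z + sw y z + se z y + sw z y) + sw x (se y z + sw y z + se z y + sw z y) +
        se (se y z + sw y z + se z y + sw z y) x + sw (se y z + sw y z + se z y + sw z y) x)) := by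
  constructor
  · intro x y; abel
  · intro x y z
    have hcw : ∀ a b : Q, nw a b = se b a := fun a b => (hc1 b a).symm
    have hca : ∀ a b : Q, nea a b = sw b a := fun a b => hc2 a b
    obtain ⟨h1, h2, h3, h4, h5, h6, h7, h8, h9⟩ := hQ x y z
    have key := congrArg₂ (· + ·) (congrArg₂ (· + ·) (congrArg₂ (· + ·)
      (congrArg₂ (· + ·) (congrArg₂ (· + ·) (congrArg₂ (· + ·) (congrArg₂ (· + ·)
      (congrArg₂ (· + ·) h1 h2) h3) h4) h5) h6) h7) h8) h9
    simp only [hcw, hca, map_add, LinearMap.add_apply] at key ⊢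
    rw [← sub_eq_zero] at key ⊢
    rw [← key]
    abel
end

section
/- Let (A, ·) be an associative algebra and β : A → A a Baxter operator, i.e., β(x)·β(y) = β(x·β(y) + β(x)·y) for all x, y. Define x ≺ y := x·β(y) and x ≻ y := β(x)·y. Then (A, ≺, ≻) is a dendriform algebra. -/
theorem baxter_gives_dendriform {K A : Type*} [Field K] [NonUnitalRing A] [Module K A]
    [SMulCommClass K A A] [IsScalarTower K A A]
    (β : A →ₗ[K] A)
    (hβ : ∀ x y : A, β x * β y = β (x * β y + β x * y)) :
    IsDendriform (fun x y => x * β y) (fun x y => β x * y) := by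
  intro x y z
  refine ⟨?_, ?_, ?_⟩ <;> simp only []
  · rw [mul_assoc, hβ, map_add, mul_add]
  · rw [mul_assoc]
  · rw [← mul_assoc, hβ, map_add, add_mul]
end

section
/- Let (D, ≺, ≻) be a dendriform algebra and γ : D → D a Baxter operator on D, i.e., γ(x)≻γ(y) = γ(x≻γ(y) + γ(x)≻y) and γ(x)≺γ(y) = γ(x≺γ(y) + γ(x)≺y). Define x↘y := γ(x)≻y, x↗y := x≻γ(y), x↙y := γ(x)≺y, x↖y := x≺γ(y). Then (D, ↘, ↗, ↖, ↙) is a quadri-algebra. -/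
theorem baxter_dendriform_gives_quadri {K D : Type*} [Field K] [AddCommGroup D] [Module K D]
    (p s : D →ₗ[K] D →ₗ[K] D)
    (hD : IsDendriform (fun a b => p a b) (fun a b => s a b))
    (γ : D →ₗ[K] D)
    (hγs : ∀ x y : D, s (γ x) (γ y) = γ (s x (γ y) + s (γ x) y))
    (hγp : ∀ x y : D, p (γ x) (γ y) = γ (p x (γ y) + p (γ x) y)) :
    IsQuadri (fun x y => s (γ x) y) (fun x y => s x (γ y)) (fun x y => p x (γ y))
      (fun x y => p (γ x) y) := by
  have h1 : ∀ x y z : D, p (p x y) z = p x (p y z) + p x (s y z) := fun x y z => (hD x y z).1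
  have h2 : ∀ x y z : D, p (s x y) z = s x (p y z) := fun x y z => (hD x y z).2.1
  have h3 : ∀ x y z : D, s (p x y) z + s (s x y) z = s x (s y z) := fun x y z => (hD x y z).2.2
  intro x y z
  refine ⟨?_, ?_, ?_, ?_, ?_, ?_, ?_, ?_, ?_⟩ <;> dsimp only
  · rw [h1, hγp, hγs]
    simp only [map_add]
    abel
  · rw [h2, hγp]
  · simp only [map_add, LinearMap.add_apply]
    rw [add_comm (s (s x (γ y)) (γ z)), h3, hγs]
    simp only [map_add]
  · rw [h1]
    simp only [map_add]
    abel
  · rw [h2]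
  · simp only [map_add, LinearMap.add_apply]
    rw [add_comm (s (s (γ x) y) (γ z)), h3]
  · rw [← hγp, h1]
    simp only [map_add]
    abel
  · rw [← hγs, h2]
  · rw [show s (γ x) y + s x (γ y) + p x (γ y) + p (γ x) y
        = (s x (γ y) + s (γ x) y) + (p x (γ y) + p (γ x) y) by abel,
      map_add γ, ← hγs, ← hγp]
    simp only [map_add, LinearMap.add_apply]
    rw [add_comm (s (s (γ x) (γ y)) z), h3]
end

section
/- Let β and γ be commuting Baxter operators on an associative algebra (A, ·), i.e., β∘γ = γ∘β. Then γ is a Baxter operator on the dendriform algebra (A, ≺_β, ≻_β) with x ≺_β y := x·β(y) and x ≻_β y := β(x)·y; that is, γ(x)≻_β γ(y) = γ(x≻_β γ(y) + γ(x)≻_β y) and γ(x)≺_β γ(y) = γ(x≺_β γ(y) + γ(x)≺_β y). -/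
theorem commuting_baxter_on_dendriform {K A : Type*} [Field K] [NonUnitalRing A] [Module K A]
    [SMulCommClass K A A] [IsScalarTower K A A]
    (β γ : A →ₗ[K] A)
    (hβ : ∀ x y : A, β x * β y = β (x * β y + β x * y))
    (hγ : ∀ x y : A, γ x * γ y = γ (x * γ y + γ x * y))
    (hcomm : ∀ x : A, β (γ x) = γ (β x)) :
    (∀ x y : A, β (γ x) * γ y = γ (β x * γ y + β (γ x) * y)) ∧
    (∀ x y : A, γ x * β (γ y) = γ (x * β (γ y) + γ x * β y)) := by
  constructor
  · intro x y
    rw [hcomm, hγ (β x) y]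
  · intro x y
    rw [hcomm, hγ x (β y)]
end

section
/- Let β and γ be commuting Baxter operators on an associative algebra (A, ·). Then A carries a quadri-algebra structure given by x↘y := β(γ(x))·y, x↗y := β(x)·γ(y), x↙y := γ(x)·β(y), x↖y := x·β(γ(y)); i.e., these four operations satisfy the nine quadri-algebra axioms. -/
theorem commuting_baxter_gives_quadri {K A : Type*} [Field K] [NonUnitalRing A] [Module K A]
    [SMulCommClass K A A] [IsScalarTower K A A]
    (β γ : A →ₗ[K] A)
    (hβ : ∀ x y : A, β x * β y = β (x * β y + β x * y))
    (hγ : ∀ x y : A, γ x * γ y = γ (x * γ y + γ x * y))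
    (hcomm : ∀ x : A, β (γ x) = γ (β x)) :
    IsQuadri (fun x y => β (γ x) * y) (fun x y => β x * γ y) (fun x y => x * β (γ y))
      (fun x y => γ x * β y) := by
  have hc : ∀ x : A, γ (β x) = β (γ x) := fun x => (hcomm x).symm
  have rule4 : ∀ x y : A, γ x * β (γ y) = γ (x * β (γ y) + γ x * β y) := by
    intro x y
    rw [hcomm, hγ, hc]
  have rule5 : ∀ x y : A, β (γ x) * γ y = γ (β x * γ y + β (γ x) * y) := by
    intro x y
    rw [hcomm, hγ, hc]
  intro x y z
  refine ⟨?_, ?_, ?_, ?_, ?_, ?_, ?_, ?_, ?_⟩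
  · simp only [hβ, hγ, rule4, rule5, hc, map_add, mul_add, add_mul, mul_assoc]
    abel
  · simp only [hβ, hγ, rule4, rule5, hc, map_add, mul_add, add_mul, mul_assoc]
  · show β (β x * γ y + x * β (γ y)) * γ z = β x * γ (β y * γ z + β (γ y) * z)
    rw [add_comm (β x * γ y), ← hβ, mul_assoc, hcomm, hγ, hc]
  · simp only [hβ, hγ, rule4, rule5, hc, map_add, mul_add, add_mul, mul_assoc]
    abel
  · simp only [hβ, hγ, rule4, rule5, hc, map_add, mul_add, add_mul, mul_assoc]
  · show β (β (γ x) * y + γ x * β y) * γ z = β (γ x) * (β y * γ z)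
    rw [add_comm, ← hβ, mul_assoc]
  · show γ (x * β (γ y) + γ x * β y) * β z = γ x * β (β (γ y) * z + γ y * β z)
    rw [hcomm y, ← hγ, mul_assoc, hc, hβ, add_comm (γ y * β z)]
  · show γ (β x * γ y + β (γ x) * y) * β z = β (γ x) * (γ y * β z)
    rw [hcomm x, ← hγ, mul_assoc, hc]
  · show β (γ (β (γ x) * y + β x * γ y + x * β (γ y) + γ x * β y)) * z
        = β (γ x) * (β (γ y) * z)
    rw [← mul_assoc, hβ, rule4, rule5, ← map_add]
    simp only [map_add, add_mul]
    abel
end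

section
/- Let (A, μ, Δ) be an infinitesimal bialgebra. On End(A) with composition as product, the operator β(T) := id ∗ T (i.e., β(T)(a) = a₁ T(a₂) in Sweedler notation, where ∗ is convolution μ∘(T⊗S)∘Δ) is a Baxter operator: β(T)∘β(S) = β(β(T)∘S + T∘β(S)). -/
open TensorProduct in
/-- Convolution of endomorphisms with respect to a comultiplication. -/
noncomputable def conv {K A : Type*} [Field K] [NonUnitalRing A] [Module K A]
    [SMulCommClass K A A] [IsScalarTower K A A]
    (Δ : A →ₗ[K] A ⊗[K] A) (T S : A →ₗ[K] A) : A →ₗ[K] A :=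
  (LinearMap.mul' K A) ∘ₗ (TensorProduct.map T S) ∘ₗ Δ

open TensorProduct in
theorem beta_is_baxter {K A : Type*} [Field K] [NonUnitalRing A] [Module K A]
    [SMulCommClass K A A] [IsScalarTower K A A]
    (Δ : A →ₗ[K] A ⊗[K] A)
    (hcoassoc : ∀ a : A,
      (TensorProduct.assoc K A A A) ((TensorProduct.map Δ LinearMap.id) (Δ a)) =
        (TensorProduct.map LinearMap.id Δ) (Δ a))
    (hcompat : ∀ a b : A,
      Δ (a * b) =
        TensorProduct.map (LinearMap.mulLeft K a) LinearMap.id (Δ b) +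
        TensorProduct.map LinearMap.id (LinearMap.mulRight K b) (Δ a)) :
    ∀ T S : A →ₗ[K] A,
      (conv Δ LinearMap.id T) ∘ₗ (conv Δ LinearMap.id S) =
        conv Δ LinearMap.id ((conv Δ LinearMap.id T) ∘ₗ S + T ∘ₗ (conv Δ LinearMap.id S)) := by
  intro T S
  -- helper 1
  have h1 : ∀ (x : A) (u : A ⊗[K] A),
      LinearMap.mul' K A (map LinearMap.id T (map (LinearMap.mulLeft K x) LinearMap.id u)) =
        x * LinearMap.mul' K A (map LinearMap.id T u) := by
    intro x u
    induction u using TensorProduct.induction_on with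
    | zero => simp
    | tmul p q => simp [mul_assoc]
    | add u v hu hv => simp [hu, hv, mul_add]
  -- helper 2
  have h2 : ∀ (y : A) (u : A ⊗[K] A),
      LinearMap.mul' K A (map LinearMap.id T (map LinearMap.id (LinearMap.mulRight K (S y)) u)) =
        LinearMap.mul' K A (map LinearMap.id
          (T ∘ₗ LinearMap.mul' K A ∘ₗ map LinearMap.id S)
          ((TensorProduct.assoc K A A A) (u ⊗ₜ[K] y))) := by
    intro y u
    induction u using TensorProduct.induction_on with
    | zero => simp
    | tmul p q => simp
    | add u v hu hv =>
      simp only [map_add, add_tmul] at *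
      simp [hu, hv]
  have key : ∀ t : A ⊗[K] A,
      conv Δ LinearMap.id T (LinearMap.mul' K A (map LinearMap.id S t)) =
        LinearMap.mul' K A (map LinearMap.id ((conv Δ LinearMap.id T) ∘ₗ S) t) +
        LinearMap.mul' K A (map LinearMap.id
          (T ∘ₗ LinearMap.mul' K A ∘ₗ map LinearMap.id S)
          ((TensorProduct.assoc K A A A) (map Δ LinearMap.id t))) := by
    intro t
    induction t using TensorProduct.induction_on with
    | zero => simp
    | tmul x y =>
      simp only [map_tmul, LinearMap.id_coe, id_eq, LinearMap.mul'_apply, conv,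
        LinearMap.comp_apply]
      rw [hcompat x (S y), map_add, map_add, h1, h2]
    | add u v hu hv =>
      simp only [map_add, hu, hv]
      abel
  ext a
  simp only [LinearMap.comp_apply]
  have := key (Δ a)
  rw [show conv Δ LinearMap.id S a = LinearMap.mul' K A (map LinearMap.id S (Δ a)) from rfl,
    this, hcoassoc a]
  have hmapmap : map (LinearMap.id : A →ₗ[K] A)
      (T ∘ₗ LinearMap.mul' K A ∘ₗ map LinearMap.id S) ∘ₗ map LinearMap.id Δ =
      map LinearMap.id (T ∘ₗ conv Δ LinearMap.id S) := by
    rw [← TensorProduct.map_comp]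
    rfl
  have := congrArg (fun f => LinearMap.mul' K A (f (Δ a))) hmapmap
  simp only [LinearMap.comp_apply] at this
  rw [this]
  show _ = LinearMap.mul' K A (map LinearMap.id (conv Δ LinearMap.id T ∘ₗ S +
    T ∘ₗ conv Δ LinearMap.id S) (Δ a))
  rw [TensorProduct.map_add_right, LinearMap.add_apply, map_add]
end

section
/- Let (A, μ, Δ) be an infinitesimal bialgebra. Then End(A) is a quadri-algebra under T↘S := (id∗T∗id)∘S, T↗S := (id∗T)∘(S∗id), T↙S := (T∗id)∘(id∗S), T↖S := T∘(id∗S∗id), where ∗ denotes convolution and ∘ composition. -/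
theorem isQuadri_of_rb {Q : Type*} [Ring Q] (B G : Q → Q)
    (Badd : ∀ u v : Q, B (u + v) = B u + B v)
    (Gadd : ∀ u v : Q, G (u + v) = G u + G v)
    (RBB : ∀ u v : Q, B u * B v = B (u * B v) + B (B u * v))
    (RBG : ∀ u v : Q, G u * G v = G (u * G v) + G (G u * v))
    (comm : ∀ u : Q, B (G u) = G (B u)) :
    IsQuadri (fun x y => B (G x) * y) (fun x y => B x * G y)
      (fun x y => x * B (G y)) (fun x y => G x * B y) := by
  have GP : ∀ u v : Q, G u * B (G v) = G (u * B (G v) + G u * B v) := by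
    intro u v
    rw [comm v, RBG u (B v), ← comm v, Gadd]
  have PG : ∀ u v : Q, B (G u) * G v = G (B u * G v + B (G u) * v) := by
    intro u v
    rw [comm u, RBG (B u) v, ← comm u, Gadd]
  have BP : ∀ u v : Q, B u * B (G v) = B (u * B (G v) + B u * G v) := by
    intro u v
    rw [RBB u (G v), Badd]
  have PB : ∀ u v : Q, B (G u) * B v = B (G u * B v + B (G u) * v) := by
    intro u v
    rw [RBB (G u) v, Badd]
  have Pmul : ∀ u v : Q,
      B (G u) * B (G v) =
        B (G (B (G u) * v + B u * G v + u * B (G v) + G u * B v)) := by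
    intro u v
    rw [RBB (G u) (G v), GP u v, PG u v, ← Badd, ← Gadd]
    congr 2
    abel
  intro x y z
  refine ⟨?_, ?_, ?_, ?_, ?_, ?_, ?_, ?_, ?_⟩ <;> dsimp only
  · rw [mul_assoc, Pmul y z]
  · rw [mul_assoc, GP y z]
  · calc B (B x * G y + x * B (G y)) * G z
        = (B (x * B (G y)) + B (B x * G y)) * G z := by rw [Badd, add_comm]
      _ = (B x * B (G y)) * G z := by rw [← RBB]
      _ = B x * (B (G y) * G z) := mul_assoc _ _ _
      _ = B x * G (B y * G z + B (G y) * z) := by rw [PG]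
  · rw [mul_assoc, BP y z, add_comm (y * B (G z)) (B y * G z)]
  · exact mul_assoc _ _ _
  · calc B (B (G x) * y + G x * B y) * G z
        = (B (G x * B y) + B (B (G x) * y)) * G z := by rw [Badd, add_comm]
      _ = (B (G x) * B y) * G z := by rw [← RBB]
      _ = B (G x) * (B y * G z) := mul_assoc _ _ _
  · calc G (x * B (G y) + G x * B y) * B z
        = (G (x * G (B y)) + G (G x * B y)) * B z := by rw [comm y, Gadd]
      _ = (G x * G (B y)) * B z := by rw [← RBG]
      _ = G x * (G (B y) * B z) := mul_assoc _ _ _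
      _ = G x * (B (G y) * B z) := by rw [comm y]
      _ = G x * B (B (G y) * z + G y * B z) := by
            rw [PB, add_comm (G y * B z) (B (G y) * z)]
  · calc G (B x * G y + B (G x) * y) * B z
        = (G (B x * G y) + G (G (B x) * y)) * B z := by rw [comm x, Gadd]
      _ = (G (B x) * G y) * B z := by rw [← RBG]
      _ = B (G x) * (G y * B z) := by rw [comm x]; exact mul_assoc _ _ _
  · rw [← Pmul x y, mul_assoc]
open TensorProduct LinearMap

section
variable {K A : Type*} [Field K] [NonUnitalRing A] [Module K A]
    [SMulCommClass K A A] [IsScalarTower K A A]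
    (Δ : A →ₗ[K] A ⊗[K] A)
    (hcoassoc : ∀ a : A,
      (TensorProduct.assoc K A A A) ((TensorProduct.map Δ LinearMap.id) (Δ a)) =
        (TensorProduct.map LinearMap.id Δ) (Δ a))
    (hcompat : ∀ a b : A,
      Δ (a * b) =
        TensorProduct.map (LinearMap.mulLeft K a) LinearMap.id (Δ b) +
        TensorProduct.map LinearMap.id (LinearMap.mulRight K b) (Δ a))

theorem conv_add_left' (T T' S : A →ₗ[K] A) :
    conv Δ (T + T') S = conv Δ T S + conv Δ T' S := by
  unfold conv; rw [TensorProduct.map_add_left, LinearMap.add_comp, LinearMap.comp_add]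

theorem conv_add_right' (T S S' : A →ₗ[K] A) :
    conv Δ T (S + S') = conv Δ T S + conv Δ T S' := by
  unfold conv; rw [TensorProduct.map_add_right, LinearMap.add_comp, LinearMap.comp_add]

include hcoassoc in
theorem conv_assoc (R S U : A →ₗ[K] A) :
    conv Δ (conv Δ R S) U = conv Δ R (conv Δ S U) := by
  set F₁ : A ⊗[K] (A ⊗[K] A) →ₗ[K] A :=
    (LinearMap.mul' K A) ∘ₗ TensorProduct.map R ((LinearMap.mul' K A) ∘ₗ TensorProduct.map S U)
    with hF
  have UC1 : ∀ t : A ⊗[K] A,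
      LinearMap.mul' K A (TensorProduct.map (conv Δ R S) U t) =
        F₁ ((TensorProduct.assoc K A A A) (TensorProduct.map Δ LinearMap.id t)) := by
    intro t
    induction t using TensorProduct.induction_on with
    | zero => simp
    | add u v hu hv => simp [hu, hv]
    | tmul x y =>
      simp only [map_tmul, id_coe, _root_.id, conv, comp_apply, mul'_apply]
      generalize (Δ x) = u
      induction u using TensorProduct.induction_on with
      | zero => simp
      | add u v hu hv =>
        simp only [map_add, add_mul, add_tmul] at hu hv ⊢
        rw [hu, hv]
      | tmul p q => simp [hF, mul_assoc]
  have UC2 : ∀ t : A ⊗[K] A,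
      LinearMap.mul' K A (TensorProduct.map R (conv Δ S U) t) =
        F₁ (TensorProduct.map LinearMap.id Δ t) := by
    intro t
    induction t using TensorProduct.induction_on with
    | zero => simp
    | add u v hu hv => simp [hu, hv]
    | tmul x y =>
      simp only [map_tmul, id_coe, _root_.id, conv, comp_apply, mul'_apply]
      generalize (Δ y) = u
      induction u using TensorProduct.induction_on with
      | zero => simp
      | add u v hu hv =>
        simp only [map_add, mul_add, tmul_add] at hu hv ⊢
        rw [hu, hv]
      | tmul p q => simp [hF]
  ext a
  have h1 : conv Δ (conv Δ R S) U a = LinearMap.mul' K A (TensorProduct.map (conv Δ R S) U (Δ a)) := rfl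
  have h2 : conv Δ R (conv Δ S U) a = LinearMap.mul' K A (TensorProduct.map R (conv Δ S U) (Δ a)) := rfl
  rw [h1, h2, UC1, UC2, hcoassoc]

include hcoassoc hcompat in
theorem convG_comp (T S : A →ₗ[K] A) :
    conv Δ T LinearMap.id ∘ₗ conv Δ S LinearMap.id =
      conv Δ (T ∘ₗ conv Δ S LinearMap.id) LinearMap.id +
      conv Δ ((conv Δ T LinearMap.id) ∘ₗ S) LinearMap.id := by
  set G₁ : (A ⊗[K] A) ⊗[K] A →ₗ[K] A :=
    (LinearMap.mul' K A) ∘ₗ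
      TensorProduct.map (T ∘ₗ (LinearMap.mul' K A) ∘ₗ TensorProduct.map S LinearMap.id)
        LinearMap.id with hG
  have UG1 : ∀ t : A ⊗[K] A,
      LinearMap.mul' K A (TensorProduct.map T LinearMap.id
          (Δ (LinearMap.mul' K A (TensorProduct.map S LinearMap.id t)))) =
        G₁ ((TensorProduct.assoc K A A A).symm (TensorProduct.map LinearMap.id Δ t)) +
        LinearMap.mul' K A (TensorProduct.map ((conv Δ T LinearMap.id) ∘ₗ S) LinearMap.id t) := by
    intro t
    induction t using TensorProduct.induction_on with
    | zero => simp
    | add u v hu hv =>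
      simp only [map_add, add_tmul, tmul_add] at hu hv ⊢
      rw [hu, hv]; abel
    | tmul x y =>
      have hA : ∀ u : A ⊗[K] A,
          LinearMap.mul' K A (TensorProduct.map T LinearMap.id
              (TensorProduct.map (LinearMap.mulLeft K (S x)) LinearMap.id u)) =
            G₁ ((TensorProduct.assoc K A A A).symm (x ⊗ₜ[K] u)) := by
        intro u
        induction u using TensorProduct.induction_on with
        | zero => simp
        | add u v hu hv => simp only [map_add, tmul_add] at hu hv ⊢; rw [hu, hv]
        | tmul p q => simp [hG, assoc_symm_tmul]
      have hB : ∀ u : A ⊗[K] A,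
          LinearMap.mul' K A (TensorProduct.map T LinearMap.id
              (TensorProduct.map LinearMap.id (LinearMap.mulRight K y) u)) =
            LinearMap.mul' K A (TensorProduct.map T LinearMap.id u) * y := by
        intro u
        induction u using TensorProduct.induction_on with
        | zero => simp
        | add u v hu hv => simp only [map_add, add_mul] at hu hv ⊢; rw [hu, hv]
        | tmul p q => simp [mul_assoc]
      simp only [map_tmul, id_coe, _root_.id, mul'_apply]
      rw [hcompat (S x) y, map_add, map_add, hA (Δ y), hB (Δ (S x))]
      simp [conv]
  have UG2 : ∀ t : A ⊗[K] A,
      LinearMap.mul' K A (TensorProduct.map (T ∘ₗ conv Δ S LinearMap.id) LinearMap.id t) =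
        G₁ (TensorProduct.map Δ LinearMap.id t) := by
    intro t
    induction t using TensorProduct.induction_on with
    | zero => simp
    | add u v hu hv => simp only [map_add] at hu hv ⊢; rw [hu, hv]
    | tmul x y =>
      simp only [map_tmul, id_coe, _root_.id, mul'_apply, conv, comp_apply]
      generalize (Δ x) = u
      induction u using TensorProduct.induction_on with
      | zero => simp
      | add u v hu hv =>
        simp only [map_add, add_mul, add_tmul] at hu hv ⊢
        rw [hu, hv]
      | tmul p q => simp [hG]
  ext a
  have h1 : (conv Δ T LinearMap.id ∘ₗ conv Δ S LinearMap.id) a =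
      LinearMap.mul' K A (TensorProduct.map T LinearMap.id
        (Δ (LinearMap.mul' K A (TensorProduct.map S LinearMap.id (Δ a))))) := rfl
  rw [h1, UG1 (Δ a)]
  have h2 : (TensorProduct.assoc K A A A).symm (TensorProduct.map LinearMap.id Δ (Δ a)) =
      TensorProduct.map Δ LinearMap.id (Δ a) := by
    rw [← hcoassoc a, LinearEquiv.symm_apply_apply]
  rw [h2, ← UG2 (Δ a)]
  rfl

include hcoassoc hcompat in
theorem convB_comp (T S : A →ₗ[K] A) :
    conv Δ LinearMap.id T ∘ₗ conv Δ LinearMap.id S =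
      conv Δ LinearMap.id (T ∘ₗ conv Δ LinearMap.id S) +
      conv Δ LinearMap.id ((conv Δ LinearMap.id T) ∘ₗ S) := by
  set H₁ : A ⊗[K] (A ⊗[K] A) →ₗ[K] A :=
    (LinearMap.mul' K A) ∘ₗ
      TensorProduct.map LinearMap.id
        (T ∘ₗ (LinearMap.mul' K A) ∘ₗ TensorProduct.map LinearMap.id S) with hH
  have UB1 : ∀ t : A ⊗[K] A,
      LinearMap.mul' K A (TensorProduct.map LinearMap.id T
          (Δ (LinearMap.mul' K A (TensorProduct.map LinearMap.id S t)))) =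
        H₁ ((TensorProduct.assoc K A A A) (TensorProduct.map Δ LinearMap.id t)) +
        LinearMap.mul' K A (TensorProduct.map LinearMap.id ((conv Δ LinearMap.id T) ∘ₗ S) t) := by
    intro t
    induction t using TensorProduct.induction_on with
    | zero => simp
    | add u v hu hv =>
      simp only [map_add, add_tmul, tmul_add] at hu hv ⊢
      rw [hu, hv]; abel
    | tmul x y =>
      have hA : ∀ u : A ⊗[K] A,
          LinearMap.mul' K A (TensorProduct.map LinearMap.id T
              (TensorProduct.map (LinearMap.mulLeft K x) LinearMap.id u)) =
            x * LinearMap.mul' K A (TensorProduct.map LinearMap.id T u) := by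
        intro u
        induction u using TensorProduct.induction_on with
        | zero => simp
        | add u v hu hv => simp only [map_add, mul_add] at hu hv ⊢; rw [hu, hv]
        | tmul p q => simp [mul_assoc]
      have hB : ∀ u : A ⊗[K] A,
          LinearMap.mul' K A (TensorProduct.map LinearMap.id T
              (TensorProduct.map LinearMap.id (LinearMap.mulRight K (S y)) u)) =
            H₁ ((TensorProduct.assoc K A A A) (u ⊗ₜ[K] y)) := by
        intro u
        induction u using TensorProduct.induction_on with
        | zero => simp
        | add u v hu hv => simp only [map_add, add_tmul] at hu hv ⊢; rw [hu, hv]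
        | tmul p q => simp [hH, assoc_tmul]
      simp only [map_tmul, id_coe, _root_.id, mul'_apply]
      rw [hcompat x (S y), map_add, map_add, hA (Δ (S y)), hB (Δ x)]
      simp only [conv, comp_apply, map_tmul, id_coe, _root_.id, mul'_apply]
      rw [add_comm]
  have UB2 : ∀ t : A ⊗[K] A,
      LinearMap.mul' K A (TensorProduct.map LinearMap.id (T ∘ₗ conv Δ LinearMap.id S) t) =
        H₁ (TensorProduct.map LinearMap.id Δ t) := by
    intro t
    induction t using TensorProduct.induction_on with
    | zero => simp
    | add u v hu hv => simp only [map_add] at hu hv ⊢; rw [hu, hv]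
    | tmul x y =>
      simp only [map_tmul, id_coe, _root_.id, mul'_apply, conv, comp_apply]
      generalize (Δ y) = u
      induction u using TensorProduct.induction_on with
      | zero => simp
      | add u v hu hv =>
        simp only [map_add, mul_add, tmul_add] at hu hv ⊢
        rw [hu, hv]
      | tmul p q => simp [hH]
  ext a
  have h1 : (conv Δ LinearMap.id T ∘ₗ conv Δ LinearMap.id S) a =
      LinearMap.mul' K A (TensorProduct.map LinearMap.id T
        (Δ (LinearMap.mul' K A (TensorProduct.map LinearMap.id S (Δ a))))) := rfl
  rw [h1, UB1 (Δ a), hcoassoc a, ← UB2 (Δ a)]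
  rfl

end

open TensorProduct in
theorem end_of_eps_bialgebra_is_quadri {K A : Type*} [Field K] [NonUnitalRing A] [Module K A]
    [SMulCommClass K A A] [IsScalarTower K A A]
    (Δ : A →ₗ[K] A ⊗[K] A)
    (hcoassoc : ∀ a : A,
      (TensorProduct.assoc K A A A) ((TensorProduct.map Δ LinearMap.id) (Δ a)) =
        (TensorProduct.map LinearMap.id Δ) (Δ a))
    (hcompat : ∀ a b : A,
      Δ (a * b) =
        TensorProduct.map (LinearMap.mulLeft K a) LinearMap.id (Δ b) +
        TensorProduct.map LinearMap.id (LinearMap.mulRight K b) (Δ a)) :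
    IsQuadri (Q := A →ₗ[K] A)
      (fun T S => (conv Δ LinearMap.id (conv Δ T LinearMap.id)) ∘ₗ S)
      (fun T S => (conv Δ LinearMap.id T) ∘ₗ (conv Δ S LinearMap.id))
      (fun T S => T ∘ₗ (conv Δ LinearMap.id (conv Δ S LinearMap.id)))
      (fun T S => (conv Δ T LinearMap.id) ∘ₗ (conv Δ LinearMap.id S)) := by
  have h := isQuadri_of_rb (Q := A →ₗ[K] A)
    (fun T => conv Δ LinearMap.id T) (fun T => conv Δ T LinearMap.id)
    (fun u v => conv_add_right' Δ LinearMap.id u v)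
    (fun u v => conv_add_left' Δ u v LinearMap.id)
    (fun u v => convB_comp Δ hcoassoc hcompat u v)
    (fun u v => convG_comp Δ hcoassoc hcompat u v)
    (fun u => (conv_assoc Δ hcoassoc LinearMap.id u LinearMap.id).symm)
  exact h
end

section
/- Let g(t) = t(-1+t)/(1+t)³ = Σ_{n≥1} (-1)ⁿ n² tⁿ as a formal power series. If f(t) = Σ_{n≥1} (-1)ⁿ d_n tⁿ is the compositional inverse of g (i.e., f(g(t)) = t), then d_n = (1/n) Σ_{j=n}^{2n-1} C(3n, n+1+j)·C(j-1, j-n), where C denotes binomial coefficients. In particular d₁ = 1, d₂ = 4, d₃ = 23. -/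
open PowerSeries

noncomputable def gg : PowerSeries ℚ := PowerSeries.mk fun k => (-1 : ℚ) ^ k * (k : ℚ) ^ 2
noncomputable def pp : PowerSeries ℚ := (1 + PowerSeries.X) ^ 3
noncomputable def uu : PowerSeries ℚ := (PowerSeries.X - 1) * pp⁻¹
noncomputable def vv : PowerSeries ℚ := pp * (PowerSeries.X - 1)⁻¹

theorem part1 : (1 + PowerSeries.X) ^ 3 * gg = PowerSeries.X * (PowerSeries.X - 1) := by
  have hexp : ((1 + PowerSeries.X) ^ 3 : PowerSeries ℚ) * gg
      = gg + (X^1 * gg + X^1 * gg + X^1 * gg) + (X^2 * gg + X^2 * gg + X^2 * gg)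
        + X^3 * gg := by ring
  have hrhs : (PowerSeries.X * (PowerSeries.X - 1) : PowerSeries ℚ) = X^2 - X^1 := by ring
  ext m
  rw [hexp, hrhs]
  simp only [map_add, map_sub, coeff_X_pow_mul', coeff_X_pow, gg, coeff_mk]
  rcases m with _ | _ | _ | m
  · norm_num
  · norm_num
  · norm_num
  · have h1 : ¬ (m + 3 = 2) := by omega
    have h2 : ¬ (m + 3 = 1) := by omega
    have e1 : m + 3 - 1 = m + 2 := by omega
    have e2 : m + 3 - 2 = m + 1 := by omega
    have e3 : m + 3 - 3 = m := by omega
    simp only [show m+1+1+1 = m+3 from rfl, h1, h2, if_false, if_true,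
      show 1 ≤ m + 3 by omega, show 2 ≤ m + 3 by omega,
      show 3 ≤ m + 3 by omega, if_pos, e1, e2, e3]
    push_cast
    ring

lemma constCoeff_pp : constantCoeff (R := ℚ) pp = 1 := by
  simp [pp]

lemma constCoeff_Xm1 : constantCoeff (R := ℚ) (PowerSeries.X - 1 : PowerSeries ℚ) = -1 := by
  simp

lemma hXu : gg = PowerSeries.X * uu := by
  have h1 : pp⁻¹ * pp = 1 := PowerSeries.inv_mul_cancel _ (by rw [constCoeff_pp]; norm_num)
  have := part1
  calc gg = pp⁻¹ * (pp * gg) := by rw [← mul_assoc, h1, one_mul]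
  _ = pp⁻¹ * (PowerSeries.X * (PowerSeries.X - 1)) := by rw [pp, this]
  _ = PowerSeries.X * uu := by rw [uu]; ring

lemma huv : uu * vv = 1 := by
  have h1 : pp⁻¹ * pp = 1 := PowerSeries.inv_mul_cancel _ (by rw [constCoeff_pp]; norm_num)
  have h2 : (PowerSeries.X - 1 : PowerSeries ℚ) * (PowerSeries.X - 1)⁻¹ = 1 :=
    PowerSeries.mul_inv_cancel _ (by rw [constCoeff_Xm1]; norm_num)
  calc uu * vv = ((PowerSeries.X - 1) * (PowerSeries.X - 1)⁻¹) * (pp⁻¹ * pp) := by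
        rw [uu, vv]; ring
  _ = 1 := by rw [h1, h2, one_mul]

lemma constCoeff_vv : constantCoeff (R := ℚ) vv = -1 := by
  rw [vv, map_mul, constCoeff_pp, PowerSeries.constantCoeff_inv, constCoeff_Xm1]
  norm_num

lemma constCoeff_dgg : constantCoeff (R := ℚ) (PowerSeries.derivative ℚ gg) = -1 := by
  rw [← coeff_zero_eq_constantCoeff_apply, PowerSeries.coeff_derivative]
  simp [gg]

local notation "D" => PowerSeries.derivative ℚ

lemma hderiv_gg : D gg = uu + PowerSeries.X * D uu := by
  rw [hXu, Derivation.leibniz, smul_eq_mul, smul_eq_mul, PowerSeries.derivative_X, mul_one,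
    add_comm]

lemma huv' : D uu * vv + uu * D vv = 0 := by
  have h : D (uu * vv) = 0 := by rw [huv, Derivation.map_one_eq_zero]
  rw [Derivation.leibniz, smul_eq_mul, smul_eq_mul] at h
  linear_combination h

lemma key (j : ℕ) : D gg * vv^(j+2) = vv^(j+1) - PowerSeries.X * D vv * vv^j := by
  rw [hderiv_gg]
  linear_combination vv^(j+1) * huv + PowerSeries.X * vv^(j+1) * huv'
    - PowerSeries.X * (D vv) * vv^j * huv

lemma reslemma (j : ℕ) : (PowerSeries.coeff (R := ℚ) (j+1)) (D gg * vv^(j+2)) = 0 := by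
  have hpow : D (vv^(j+1)) = (j+1) • vv ^ j • D vv := by
    simpa using Derivation.leibniz_pow (PowerSeries.derivative ℚ) (a := vv) (j+1)
  have h1 : (PowerSeries.coeff (R := ℚ) j) (D (vv^(j+1)))
      = (PowerSeries.coeff (R := ℚ) (j+1)) (vv^(j+1)) * ((j:ℚ)+1) := by
    have := PowerSeries.coeff_derivative (vv^(j+1)) j
    push_cast at this; exact this
  have h2 : (PowerSeries.coeff (R := ℚ) j) (D (vv^(j+1)))
      = ((j:ℚ)+1) * (PowerSeries.coeff (R := ℚ) j) (vv ^ j * D vv) := by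
    rw [hpow, smul_eq_mul, map_nsmul, nsmul_eq_mul]
    push_cast; ring
  have h3 : (PowerSeries.coeff (R := ℚ) (j+1)) (PowerSeries.X * D vv * vv^j)
      = (PowerSeries.coeff (R := ℚ) j) (vv^j * D vv) := by
    rw [mul_assoc, PowerSeries.coeff_succ_X_mul, mul_comm]
  have hj : ((j:ℚ)+1) ≠ 0 := by positivity
  rw [key, map_sub, h3]
  have h4 := h1.symm.trans h2
  have h5 : (PowerSeries.coeff (R := ℚ) j) (vv^j * D vv) = (PowerSeries.coeff (R := ℚ) (j+1)) (vv^(j+1)) := by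
    have := mul_left_cancel₀ hj (show ((j:ℚ)+1) * (PowerSeries.coeff (R := ℚ) (j+1)) (vv^(j+1))
      = ((j:ℚ)+1) * (PowerSeries.coeff (R := ℚ) j) (vv^j * D vv) by linear_combination h4)
    exact this.symm
  rw [h5, sub_self]

lemma uv_pow (a b : ℕ) : uu^a * vv^(a+b) = vv^b := by
  induction a with
  | zero => simp
  | succ a ih =>
    have h : uu^(a+1) * vv^(a+1+b) = (uu * vv) * (uu^a * vv^(a+b)) := by ring
    rw [h, huv, one_mul, ih]

lemma term_coeff (M n : ℕ) (hn : n ∈ Finset.Icc 1 (M+1)) :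
    (PowerSeries.coeff (R := ℚ) M) (D (gg^n) * vv^(M+1))
      = if n = M+1 then ((M:ℚ)+1) else 0 := by
  obtain ⟨i, rfl⟩ : ∃ i, n = i + 1 := ⟨n - 1, by simp at hn; omega⟩
  have hiM : i ≤ M := by simp at hn; omega
  obtain ⟨k, rfl⟩ : ∃ k, M = i + k := ⟨M - i, by omega⟩
  have hD : D (gg^(i+1)) = (i+1) • gg^i • D gg := by
    simpa using Derivation.leibniz_pow (PowerSeries.derivative ℚ) (a := gg) (i+1)
  have hg : gg^i = PowerSeries.X^i * uu^i := by rw [hXu, mul_pow]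
  have hsplit : D (gg^(i+1)) * vv^(i+k+1)
      = ((i+1 : ℕ) : PowerSeries ℚ) * (PowerSeries.X^i * (D gg * vv^(k+1))) := by
    rw [hD, hg, smul_eq_mul, nsmul_eq_mul]
    linear_combination ((i+1 : ℕ) : PowerSeries ℚ) * PowerSeries.X^i * D gg * uv_pow i (k+1)
  rw [hsplit]
  have hc : (PowerSeries.coeff (R := ℚ) (i+k)) (((i+1 : ℕ) : PowerSeries ℚ)
      * (PowerSeries.X^i * (D gg * vv^(k+1))))
      = ((i:ℚ)+1) * (PowerSeries.coeff (R := ℚ) k) (D gg * vv^(k+1)) := by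
    have : ((i+1 : ℕ) : PowerSeries ℚ) = PowerSeries.C (R := ℚ) ((i:ℚ)+1) := by
      push_cast; simp
    rw [this, PowerSeries.coeff_C_mul, add_comm i k, PowerSeries.coeff_X_pow_mul]
  rw [hc]
  rcases k with _ | j
  · have h0 : (PowerSeries.coeff (R := ℚ) 0) (D gg * vv^(0+1)) = 1 := by
      rw [PowerSeries.coeff_zero_eq_constantCoeff, map_mul, pow_one, constCoeff_dgg,
        constCoeff_vv]
      norm_num
    simp only [h0, if_pos rfl]
    push_cast; ring
  · rw [reslemma j, mul_zero, if_neg (by omega)]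

lemma coeff_gg_pow_eq_zero {k n : ℕ} (h : k < n) : (PowerSeries.coeff (R := ℚ) k) (gg^n) = 0 := by
  have hg : gg^n = PowerSeries.X^n * uu^n := by rw [hXu, mul_pow]
  rw [hg, PowerSeries.coeff_X_pow_mul', if_neg (by omega)]

lemma main_extract (d : ℕ → ℚ)
    (hinv : ∀ m : ℕ, 1 ≤ m →
      (∑ n ∈ Finset.Icc 1 m, (-1 : ℚ) ^ n * d n *
        (PowerSeries.coeff (R := ℚ) m) (gg ^ n)) = if m = 1 then 1 else 0)
    (M : ℕ) :
    ((M:ℚ)+1) * ((-1)^(M+1) * d (M+1)) = PowerSeries.coeff (R := ℚ) M (vv^(M+1)) := by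
  set S : PowerSeries ℚ :=
    ∑ n ∈ Finset.Icc 1 (M+1), ((-1 : ℚ) ^ n * d n) • gg ^ n with hSdef
  have hcoeffS : ∀ k, (PowerSeries.coeff (R := ℚ) k) S
      = ∑ n ∈ Finset.Icc 1 (M+1), (-1 : ℚ) ^ n * d n * (PowerSeries.coeff (R := ℚ) k) (gg ^ n) := by
    intro k
    rw [hSdef, map_sum]
    refine Finset.sum_congr rfl fun n _ => ?_
    rw [map_smul, smul_eq_mul]
  have hS : ∀ k, k ≤ M+1 → (PowerSeries.coeff (R := ℚ) k) S = if k = 1 then 1 else 0 := by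
    intro k hk
    rcases Nat.eq_zero_or_pos k with rfl | hkpos
    · rw [hcoeffS]
      rw [if_neg (by omega)]
      refine Finset.sum_eq_zero fun n hn => ?_
      simp only [Finset.mem_Icc] at hn
      rw [coeff_gg_pow_eq_zero (by omega), mul_zero]
    · rw [hcoeffS, ← hinv k hkpos]
      refine (Finset.sum_subset (Finset.Icc_subset_Icc_right (by omega)) ?_).symm
      intro n hn hn'
      simp only [Finset.mem_Icc] at hn hn'
      rw [coeff_gg_pow_eq_zero (by omega), mul_zero]
  -- S = X + X^(M+2) * R
  obtain ⟨R, hR⟩ : (PowerSeries.X : PowerSeries ℚ)^(M+2) ∣ (S - PowerSeries.X) := by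
    rw [PowerSeries.X_pow_dvd_iff]
    intro k hk
    rw [map_sub, hS k (by omega), PowerSeries.coeff_X]
    split_ifs <;> norm_num
  have hSX : S = PowerSeries.X + PowerSeries.X^(M+2) * R := by
    rw [← hR]; ring
  -- derivative
  have hdvd : (PowerSeries.X : PowerSeries ℚ)^(M+1) ∣ (D S - 1) := by
    rw [hSX]
    have : D (PowerSeries.X + PowerSeries.X^(M+2) * R)
        = 1 + (PowerSeries.X^(M+2) * D R + R * ((M+2) • PowerSeries.X^(M+1))) := by
      rw [map_add, PowerSeries.derivative_X, Derivation.leibniz, smul_eq_mul, smul_eq_mul]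
      congr 2
      have := Derivation.leibniz_pow (PowerSeries.derivative ℚ) (a := (PowerSeries.X : PowerSeries ℚ)) (M+2)
      simpa using this
    rw [this, add_sub_cancel_left]
    refine dvd_add (Dvd.dvd.mul_right ?_ _) (Dvd.dvd.mul_left ?_ _)
    · exact pow_dvd_pow _ (by omega)
    · rw [nsmul_eq_mul]
      exact Dvd.intro_left _ rfl
  obtain ⟨Q, hQ⟩ := hdvd
  have hDS : D S = 1 + PowerSeries.X^(M+1) * Q := by rw [← hQ]; ring
  -- coefficient of M in (D S) * vv^(M+1), way 1
  have way1 : (PowerSeries.coeff (R := ℚ) M) (D S * vv^(M+1))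
      = (PowerSeries.coeff (R := ℚ) M) (vv^(M+1)) := by
    rw [hDS, add_mul, one_mul, map_add, mul_assoc, PowerSeries.coeff_X_pow_mul',
      if_neg (by omega), add_zero]
  -- way 2
  have way2 : (PowerSeries.coeff (R := ℚ) M) (D S * vv^(M+1))
      = ((M:ℚ)+1) * ((-1)^(M+1) * d (M+1)) := by
    have hDsum : D S = ∑ n ∈ Finset.Icc 1 (M+1), ((-1 : ℚ) ^ n * d n) • D (gg ^ n) := by
      rw [hSdef, map_sum]
      refine Finset.sum_congr rfl fun n _ => ?_
      rw [Derivation.map_smul]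
    rw [hDsum, Finset.sum_mul, map_sum]
    rw [Finset.sum_congr rfl (fun n hn => by
      rw [smul_mul_assoc, map_smul, smul_eq_mul, term_coeff M n hn])]
    rw [Finset.sum_congr rfl (fun n _ => mul_ite _ _ _ _)]
    simp only [mul_zero]
    rw [Finset.sum_ite_eq' (Finset.Icc 1 (M+1)) (M+1)
      (fun n => (-1 : ℚ) ^ n * d n * ((M:ℚ)+1))]
    rw [if_pos (by simp : M+1 ∈ Finset.Icc 1 (M+1))]
    ring
  rw [← way1, way2]

lemma hXm1_inv : (PowerSeries.X - 1 : PowerSeries ℚ)⁻¹ = -(PowerSeries.mk fun _ => (1:ℚ)) := by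
  rw [PowerSeries.inv_eq_iff_mul_eq_one (by rw [constCoeff_Xm1]; norm_num)]
  have h := PowerSeries.mk_one_mul_one_sub_eq_one ℚ
  have : (PowerSeries.mk (1 : ℕ → ℚ)) = (PowerSeries.mk fun _ => (1:ℚ)) := rfl
  rw [this] at h
  linear_combination h

lemma mk_one_pow (M : ℕ) :
    ((PowerSeries.mk fun _ => (1:ℚ)))^(M+1) = PowerSeries.mk fun n => ((M+n).choose M : ℚ) := by
  have h1 : (PowerSeries.invOneSubPow ℚ 1).val = (PowerSeries.mk fun _ => (1:ℚ)) := by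
    rw [PowerSeries.invOneSubPow_val_succ_eq_mk_add_choose]
    funext n; simp
  have h2 : (PowerSeries.invOneSubPow ℚ (M+1)) = (PowerSeries.invOneSubPow ℚ 1)^(M+1) := by
    rw [PowerSeries.invOneSubPow_eq_inv_one_sub_pow, PowerSeries.invOneSubPow_eq_inv_one_sub_pow,
      ← pow_mul, one_mul]
  have h3 := congrArg Units.val h2
  rw [Units.val_pow_eq_pow_val, h1] at h3
  rw [← h3, PowerSeries.invOneSubPow_val_succ_eq_mk_add_choose]

lemma coeff_one_add_X_pow (N i : ℕ) :
    PowerSeries.coeff (R := ℚ) i ((1 + PowerSeries.X)^N) = (Nat.choose N i : ℚ) := by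
  rw [add_comm (1 : PowerSeries ℚ) PowerSeries.X, add_pow, map_sum]
  have hterm : ∀ x ∈ Finset.range (N+1),
      (PowerSeries.coeff (R := ℚ) i) ((PowerSeries.X : PowerSeries ℚ)^x * 1^(N-x)
        * ((N.choose x : ℕ) : PowerSeries ℚ))
      = if x = i then ((N.choose x : ℕ) : ℚ) else 0 := by
    intro x _
    rw [one_pow, mul_one, mul_comm,
      show (((N.choose x : ℕ)) : PowerSeries ℚ) = PowerSeries.C (R := ℚ) ((N.choose x : ℚ)) from
        (map_natCast (PowerSeries.C (R := ℚ)) _).symm,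
      PowerSeries.coeff_C_mul, PowerSeries.coeff_X_pow, mul_ite, mul_one, mul_zero]
    simp [eq_comm]
  rw [Finset.sum_congr rfl hterm, Finset.sum_ite_eq' (Finset.range (N+1)) i]
  split_ifs with h
  · rfl
  · simp only [Finset.mem_range, not_lt] at h
    rw [Nat.choose_eq_zero_of_lt (by omega)]
    norm_num

lemma coeff_vv_pow (M : ℕ) :
    PowerSeries.coeff (R := ℚ) M (vv^(M+1)) = (-1:ℚ)^(M+1) *
      ∑ i ∈ Finset.range (M+1), ((3*M+3).choose i : ℚ) * ((M + (M - i)).choose M : ℚ) := by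
  have hv : vv^(M+1) = (-1:ℚ)^(M+1) •
      ((1+PowerSeries.X)^(3*(M+1)) * PowerSeries.mk fun n => ((M+n).choose M : ℚ)) := by
    rw [vv, hXm1_inv, pp, mul_pow, ← pow_mul, mul_comm 3 (M+1)]
    rw [← mk_one_pow, PowerSeries.smul_eq_C_mul, neg_pow,
      show ((-1 : PowerSeries ℚ)) = PowerSeries.C (R := ℚ) (-1) by simp, ← map_pow]
    ring
  rw [hv, map_smul, smul_eq_mul, PowerSeries.coeff_mul,
    Finset.Nat.sum_antidiagonal_eq_sum_range_succ_mk]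
  congr 1
  refine Finset.sum_congr rfl fun i _ => ?_
  rw [coeff_one_add_X_pow, PowerSeries.coeff_mk, show 3*(M+1) = 3*M+3 by ring]

lemma term_eq (M a : ℕ) (ha : a ≤ M) :
    (Nat.choose (3*(M+1)) ((M+1)+1+(M+1+a)) : ℚ) * (Nat.choose ((M+1+a)-1) ((M+1+a)-(M+1)) : ℚ)
    = ((3*M+3).choose (M-a) : ℚ) * ((M + (M - (M-a))).choose M : ℚ) := by
  have c1 : (3*M+3).choose (M-a) = (3*M+3).choose (2*M+3+a) := by
    have h := Nat.choose_symm (show 2*M+3+a ≤ 3*M+3 by omega)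
    rwa [show 3*M+3 - (2*M+3+a) = M - a by omega] at h
  have c2 : (M+a).choose M = (M+a).choose a := by
    have h := Nat.choose_symm (show a ≤ M+a by omega)
    rwa [show M+a-a = M by omega] at h
  rw [show (M+1)+1+(M+1+a) = 2*M+3+a by omega, show 3*(M+1) = 3*M+3 by ring,
    show M+1+a-1 = M+a by omega, show M+1+a-(M+1) = a by omega,
    show M - (M - a) = a by omega, c1, c2]

lemma sum_reindex (M : ℕ) :
    (∑ j ∈ Finset.Icc (M+1) (2*M+1),
      ((Nat.choose (3*(M+1)) ((M+1)+1+j) : ℚ) * (Nat.choose (j-1) (j-(M+1)) : ℚ)))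
    = ∑ i ∈ Finset.range (M+1), ((3*M+3).choose i : ℚ) * ((M + (M - i)).choose M : ℚ) := by
  refine Finset.sum_nbij' (fun j => 2*M+1-j) (fun i => 2*M+1-i) ?_ ?_ ?_ ?_ ?_
  · intro j hj; simp only [Finset.mem_Icc] at hj; simp only [Finset.mem_range]; omega
  · intro i hi; simp only [Finset.mem_range] at hi; simp only [Finset.mem_Icc]; omega
  · intro j hj; simp only [Finset.mem_Icc] at hj; omega
  · intro i hi; simp only [Finset.mem_range] at hi; omega
  · intro j hj
    simp only [Finset.mem_Icc] at hj
    obtain ⟨a, rfl⟩ : ∃ a, j = M+1+a := ⟨j-(M+1), by omega⟩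
    rw [show 2*M+1-(M+1+a) = M-a by omega]
    exact term_eq M a (by omega)

theorem inverse_series_noncrossing (d : ℕ → ℚ)
    (hinv : ∀ m : ℕ, 1 ≤ m →
      (∑ n ∈ Finset.Icc 1 m, (-1 : ℚ) ^ n * d n *
        (PowerSeries.coeff (R := ℚ) m)
          ((PowerSeries.mk fun k => (-1 : ℚ) ^ k * (k : ℚ) ^ 2) ^ n)) =
      if m = 1 then 1 else 0) :
    ((1 + PowerSeries.X) ^ 3 * (PowerSeries.mk fun k => (-1 : ℚ) ^ k * (k : ℚ) ^ 2) =
      PowerSeries.X * (PowerSeries.X - 1)) ∧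
    (∀ n : ℕ, 1 ≤ n → d n = (1 / (n : ℚ)) *
      ∑ j ∈ Finset.Icc n (2 * n - 1),
        ((Nat.choose (3 * n) (n + 1 + j) : ℚ) * (Nat.choose (j - 1) (j - n) : ℚ))) ∧
    d 1 = 1 ∧ d 2 = 4 ∧ d 3 = 23 := by
  have hformula : ∀ n : ℕ, 1 ≤ n → d n = (1 / (n : ℚ)) *
      ∑ j ∈ Finset.Icc n (2 * n - 1),
        ((Nat.choose (3 * n) (n + 1 + j) : ℚ) * (Nat.choose (j - 1) (j - n) : ℚ)) := by
    intro n hn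
    obtain ⟨M, rfl⟩ : ∃ M, n = M + 1 := ⟨n - 1, by omega⟩
    have hmain := main_extract d hinv M
    rw [coeff_vv_pow M] at hmain
    have hP : ((-1:ℚ))^(M+1) ≠ 0 := by
      apply pow_ne_zero; norm_num
    have hMn : ((M:ℚ)+1) ≠ 0 := by positivity
    have hsum := sum_reindex M
    rw [show 2*(M+1)-1 = 2*M+1 by omega, hsum]
    have hkey : ((M:ℚ)+1) * d (M+1)
        = ∑ i ∈ Finset.range (M+1), ((3*M+3).choose i : ℚ) * ((M + (M - i)).choose M : ℚ) := by
      apply mul_left_cancel₀ hP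
      linear_combination hmain
    push_cast
    field_simp
    linear_combination hkey
  refine ⟨part1, hformula, ?_, ?_, ?_⟩
  · rw [hformula 1 (by norm_num)]
    norm_num
  · rw [hformula 2 (by norm_num)]
    rw [show Finset.Icc 2 (2*2-1) = {2, 3} from rfl]
    norm_num [Nat.choose]
  · rw [hformula 3 (by norm_num)]
    rw [show Finset.Icc 3 (2*3-1) = {3, 4, 5} from rfl]
    norm_num [Nat.choose]
end
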